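/- For fixed g ≥ 3, with b_{2n+1} = ∫_{[0,π]^g} w₁^{2n+1} ((1/6)w₁³ − (1/2)w₁w₂ + (1/3)w₃ − w₁) dm_g, where dm_g = (1/(g!·π^g)) ∏_{i<j}(2cosθ_i − 2cosθ_j)² ∏_i 2sin²θ_i dθ₁…dθ_g and w_k = Σ_j 2cos(kθ_j), one has lim_{n→∞} b_{2n+1}^{1/(2n+1)} = 2g. -/

import Mathlib

/-!
On `[0,π]^g` the sum `w₁` reaches its extreme values `±2g` only at the corners `θ = 0` and
`θ = π`, where `F = (1/6)w₁³ − (1/2)w₁w₂ + (1/3)w₃ − w₁` equals `±2g(2g+1)(g−2)/3`; so `w₁ F > 0`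
at both corners when `g ≥ 3`, and by compactness `w₁ F ≥ 0` wherever `|w₁| > ρ`, for some
`ρ < 2g`. The odd moments `∫ w₁^{2n+1} F dm_g` are then at least `t^{2n+1} c − O(ρ^{2n+1})` for
every `t < 2g` (from a set of positive mass near `0` where `w₁ ≥ t`), and at most
`O((2g)^{2n+1})`; taking `(2n+1)`-th roots gives the limit `2g`.
-/

open Real MeasureTheory Filter Finset Topology

lemma tendsto_rpow_one_div_of_pow_bounds {a : ℕ → ℝ} {k : ℕ → ℕ} {M : ℝ}
    (hk : Tendsto k atTop atTop) (hM : 0 < M)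
    (hlower : ∀ t, 0 ≤ t → t < M → ∀ᶠ n in atTop, t ^ k n ≤ a n)
    (hupper : ∀ s, M < s → ∀ᶠ n in atTop, a n ≤ s ^ k n) :
    Tendsto (fun n => a n ^ (1 / (k n : ℝ))) atTop (𝓝 M) := by
  have hk0 : ∀ᶠ n in atTop, k n ≠ 0 := hk.eventually_ne_atTop 0
  have root {t : ℝ} (ht : 0 ≤ t) {n : ℕ} (hn : k n ≠ 0) : (t ^ k n) ^ (1 / (k n : ℝ)) = t := by
    rw [one_div]; exact pow_rpow_inv_natCast ht hn
  rw [tendsto_order]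
  refine ⟨fun x hx => ?_, fun x hx => ?_⟩
  · obtain ⟨t, hxt, htM⟩ := exists_between (max_lt hx hM)
    have ht0 : 0 ≤ t := (le_max_right _ _).trans hxt.le
    filter_upwards [hlower t ht0 htM, hk0] with n hn hn0
    calc x < t := (le_max_left _ _).trans_lt hxt
      _ = (t ^ k n) ^ (1 / (k n : ℝ)) := (root ht0 hn0).symm
      _ ≤ a n ^ (1 / (k n : ℝ)) := by gcongr
  · obtain ⟨s, hMs, hsx⟩ := exists_between hx
    filter_upwards [hlower 0 le_rfl hM, hupper s hMs, hk0] with n h0 hn hn0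
    have : 0 ≤ a n := by simpa [zero_pow hn0] using h0
    calc a n ^ (1 / (k n : ℝ)) ≤ (s ^ k n) ^ (1 / (k n : ℝ)) := by gcongr
      _ = s := root (hM.trans hMs).le hn0
      _ < x := hsx

lemma eventually_pow_mul_lt_pow_mul {r s : ℝ} (D : ℝ) {E : ℝ} (hr : 0 ≤ r) (hrs : r < s)
    (hE : 0 < E) : ∀ᶠ n : ℕ in atTop, r ^ n * D < s ^ n * E := by
  have hs : 0 < s := hr.trans_lt hrs
  have h : Tendsto (fun n : ℕ => (r / s) ^ n * D) atTop (𝓝 0) := by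
    simpa using (tendsto_pow_atTop_nhds_zero_of_lt_one (div_nonneg hr hs.le)
      ((div_lt_one hs).2 hrs)).mul_const D
  filter_upwards [h.eventually (gt_mem_nhds hE)] with n hn
  rwa [div_pow, div_mul_eq_mul_div, div_lt_iff₀ (by positivity), mul_comm E] at hn

lemma neg_pow_mul_le_pow_mul {y z ρ C : ℝ} (n : ℕ) (hρ : 0 ≤ ρ) (hz : |z| ≤ C)
    (hsign : ρ < |y| → 0 ≤ y * z) : -(ρ ^ (2 * n + 1) * C) ≤ y ^ (2 * n + 1) * z := by
  rcases lt_or_ge ρ |y| with hy | hy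
  · have : 0 ≤ y ^ (2 * n + 1) * z := by
      rw [pow_succ, pow_mul, mul_assoc]
      exact mul_nonneg (pow_nonneg (sq_nonneg y) n) (hsign hy)
    have : 0 ≤ ρ ^ (2 * n + 1) * C := by
      have := (abs_nonneg z).trans hz
      positivity
    linarith
  · have : |y ^ (2 * n + 1) * z| ≤ ρ ^ (2 * n + 1) * C := by
      rw [abs_mul, abs_pow]
      exact mul_le_mul (pow_le_pow_left₀ (abs_nonneg y) hy _) hz (abs_nonneg z) (by positivity)
    linarith [neg_abs_le (y ^ (2 * n + 1) * z)]

section OddMoments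

variable {X : Type*} [MeasurableSpace X] {μ : Measure X} {f φ : X → ℝ}

lemma ae_norm_pow_mul_le {M C : ℝ} (k : ℕ) (hfM : ∀ᵐ x ∂μ, |f x| ≤ M)
    (hφC : ∀ᵐ x ∂μ, |φ x| ≤ C) : ∀ᵐ x ∂μ, ‖f x ^ k * φ x‖ ≤ M ^ k * C := by
  filter_upwards [hfM, hφC] with x hf hφ
  rw [Real.norm_eq_abs, abs_mul, abs_pow]
  exact mul_le_mul (pow_le_pow_left₀ (abs_nonneg _) hf _) hφ (abs_nonneg _)
    (pow_nonneg ((abs_nonneg _).trans hf) _)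

lemma integral_pow_mul_le [IsFiniteMeasure μ] {M C : ℝ} (k : ℕ) (hfM : ∀ᵐ x ∂μ, |f x| ≤ M)
    (hφC : ∀ᵐ x ∂μ, |φ x| ≤ C) :
    ∫ x, f x ^ k * φ x ∂μ ≤ M ^ k * (C * μ.real Set.univ) := by
  rw [← mul_assoc]
  exact (le_abs_self _).trans (norm_integral_le_of_norm_le_const (ae_norm_pow_mul_le k hfM hφC))

lemma sub_le_integral_odd_moment [IsFiniteMeasure μ] {ρ t c C : ℝ} (n : ℕ) (hρ : 0 ≤ ρ)
    (hρt : ρ < t) (hc : 0 ≤ c) (hint : Integrable (fun x => f x ^ (2 * n + 1) * φ x) μ)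
    (hφC : ∀ᵐ x ∂μ, |φ x| ≤ C)
    (hsign : ∀ᵐ x ∂μ, ρ < |f x| → 0 ≤ f x * φ x) {B : Set X} (hB : MeasurableSet B)
    (hBpeak : ∀ x ∈ B, t ≤ f x ∧ c ≤ φ x) :
    t ^ (2 * n + 1) * c * μ.real B - ρ ^ (2 * n + 1) * C * μ.real Set.univ
      ≤ ∫ x, f x ^ (2 * n + 1) * φ x ∂μ := by
  have hpoint : ∀ᵐ x ∂μ, B.indicator (fun _ => t ^ (2 * n + 1) * c) x - ρ ^ (2 * n + 1) * C
      ≤ f x ^ (2 * n + 1) * φ x := by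
    filter_upwards [hφC, hsign] with x hφ hs
    have hneg := neg_pow_mul_le_pow_mul n hρ hφ hs
    by_cases hx : x ∈ B
    · obtain ⟨hft, hcφ⟩ := hBpeak x hx
      have ht : 0 ≤ t := hρ.trans hρt.le
      have : t ^ (2 * n + 1) * c ≤ f x ^ (2 * n + 1) * φ x :=
        mul_le_mul (pow_le_pow_left₀ ht hft _) hcφ hc (pow_nonneg (ht.trans hft) _)
      have : 0 ≤ ρ ^ (2 * n + 1) * C := by
        have := (abs_nonneg (φ x)).trans hφ
        positivity
      rw [Set.indicator_of_mem hx]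
      linarith
    · rw [Set.indicator_of_notMem hx]
      linarith
  calc t ^ (2 * n + 1) * c * μ.real B - ρ ^ (2 * n + 1) * C * μ.real Set.univ
      = ∫ x, (B.indicator (fun _ => t ^ (2 * n + 1) * c) x - ρ ^ (2 * n + 1) * C) ∂μ := by
        rw [integral_sub ((integrable_const _).indicator hB) (integrable_const _),
          integral_indicator_const _ hB, integral_const, smul_eq_mul, smul_eq_mul]
        ring
    _ ≤ ∫ x, f x ^ (2 * n + 1) * φ x ∂μ :=
        integral_mono_ae (((integrable_const _).indicator hB).sub (integrable_const _)) hint hpoint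

theorem tendsto_integral_odd_moment_rpow [IsFiniteMeasure μ] {M C : ℝ} (hM : 0 < M)
    (hf : AEStronglyMeasurable f μ) (hφ : AEStronglyMeasurable φ μ)
    (hfM : ∀ᵐ x ∂μ, |f x| ≤ M) (hφC : ∀ᵐ x ∂μ, |φ x| ≤ C)
    (hsign : ∃ ρ < M, ∀ᵐ x ∂μ, ρ < |f x| → 0 ≤ f x * φ x)
    (hpeak : ∀ t < M, ∃ B, MeasurableSet B ∧ 0 < μ B ∧ ∃ c > 0, ∀ x ∈ B, t ≤ f x ∧ c ≤ φ x) :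
    Tendsto (fun n : ℕ => (∫ x, f x ^ (2 * n + 1) * φ x ∂μ) ^ ((1 : ℝ) / (2 * n + 1)))
      atTop (𝓝 M) := by
  have hk : Tendsto (fun n : ℕ => 2 * n + 1) atTop atTop :=
    tendsto_atTop_mono (fun n => show n ≤ 2 * n + 1 by omega) tendsto_id
  have hint (n : ℕ) : Integrable (fun x => f x ^ (2 * n + 1) * φ x) μ :=
    .of_bound ((hf.pow _).mul hφ) _ (ae_norm_pow_mul_le _ hfM hφC)
  obtain ⟨ρ, hρM, hsign⟩ := hsign
  have hρ'M : max ρ 0 < M := max_lt hρM hM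
  have hsign' : ∀ᵐ x ∂μ, max ρ 0 < |f x| → 0 ≤ f x * φ x :=
    hsign.mono fun x h hx => h ((le_max_left _ _).trans_lt hx)
  refine (tendsto_rpow_one_div_of_pow_bounds hk hM
    (a := fun n => ∫ x, f x ^ (2 * n + 1) * φ x ∂μ) (fun t ht0 htM => ?_) (fun s hMs => ?_)).congr
    fun n => by push_cast; rfl
  · obtain ⟨t₁, ht₁, ht₁M⟩ := exists_between (max_lt htM hρ'M)
    obtain ⟨B, hB, hμB, c, hc, hBpeak⟩ := hpeak t₁ ht₁M
    have hBreal : 0 < c * μ.real B / 2 := by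
      have : 0 < μ.real B := ENNReal.toReal_pos hμB.ne' (measure_ne_top μ B)
      positivity
    filter_upwards [hk.eventually (eventually_pow_mul_lt_pow_mul 1 ht0
        ((le_max_left _ _).trans_lt ht₁) hBreal),
      hk.eventually (eventually_pow_mul_lt_pow_mul (C * μ.real Set.univ) (le_max_right ρ 0)
        ((le_max_right _ _).trans_lt ht₁) hBreal)] with n h1 h2
    have := sub_le_integral_odd_moment n (le_max_right ρ 0) ((le_max_right _ _).trans_lt ht₁)
      hc.le (hint n) hφC hsign' hB hBpeak
    linarith
  · filter_upwards [hk.eventually (eventually_pow_mul_lt_pow_mul (C * μ.real Set.univ) hM.le hMs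
      one_pos)] with n hn
    simpa using (integral_pow_mul_le _ hfM hφC).trans hn.le

end OddMoments

noncomputable def cosSum {g : ℕ} (k : ℕ) (θ : Fin g → ℝ) : ℝ := ∑ j, 2 * cos (k * θ j)

-- `e₃ − e₁` of the eigenvalues `e^{±iθ_j}`, written through Newton's identities.
noncomputable def cubicWeight {g : ℕ} (θ : Fin g → ℝ) : ℝ :=
  (1/6) * cosSum 1 θ ^ 3 - (1/2) * cosSum 1 θ * cosSum 2 θ + (1/3) * cosSum 3 θ - cosSum 1 θ

noncomputable def symplecticDensity {g : ℕ} (θ : Fin g → ℝ) : ℝ :=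
  1 / ((g.factorial : ℝ) * π ^ g) *
    (∏ i, ∏ j ∈ univ.filter (fun j => i < j), (2 * cos (θ i) - 2 * cos (θ j)) ^ 2) *
    ∏ i, 2 * sin (θ i) ^ 2

section WeylIntegrand

variable {g : ℕ}

@[fun_prop]
lemma continuous_cosSum (k : ℕ) : Continuous (cosSum (g := g) k) := by
  unfold cosSum; fun_prop

@[fun_prop]
lemma continuous_cubicWeight : Continuous (cubicWeight (g := g)) := by
  unfold cubicWeight; fun_prop

@[fun_prop]
lemma continuous_symplecticDensity : Continuous (symplecticDensity (g := g)) := by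
  unfold symplecticDensity; fun_prop

lemma symplecticDensity_nonneg (θ : Fin g → ℝ) : 0 ≤ symplecticDensity θ := by
  unfold symplecticDensity; positivity

lemma symplecticDensity_pos {θ : Fin g → ℝ} (hθ : θ ∈ Set.univ.pi fun _ => Set.Ioo 0 π)
    (hinj : Function.Injective θ) : 0 < symplecticDensity θ := by
  have hθ' (j : Fin g) : θ j ∈ Set.Ioo 0 π := hθ j trivial
  unfold symplecticDensity
  refine mul_pos (mul_pos (by positivity) (prod_pos fun i _ => prod_pos fun j hj => ?_))
    (prod_pos fun i _ => ?_)
  · have hcos : cos (θ i) ≠ cos (θ j) := fun h =>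
      (mem_filter.1 hj).2.ne (hinj (injOn_cos (Set.Ioo_subset_Icc_self (hθ' i))
        (Set.Ioo_subset_Icc_self (hθ' j)) h))
    have : 2 * cos (θ i) - 2 * cos (θ j) ≠ 0 := by
      intro h; apply hcos; linarith
    positivity
  · have := sin_pos_of_pos_of_lt_pi (hθ' i).1 (hθ' i).2
    positivity

lemma abs_cosSum_le (k : ℕ) (θ : Fin g → ℝ) : |cosSum k θ| ≤ 2 * g := by
  calc |cosSum k θ| ≤ ∑ j, |2 * cos (k * θ j)| := abs_sum_le_sum_abs _ _
    _ ≤ ∑ _j : Fin g, 2 := sum_le_sum fun j _ => by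
        rw [abs_mul, abs_two]; linarith [abs_cos_le_one (k * θ j)]
    _ = 2 * g := by simp [mul_comm]

lemma cosSum_const (k : ℕ) (x : ℝ) : cosSum k (fun _ : Fin g => x) = 2 * g * cos (k * x) := by
  simp [cosSum]; ring

lemma cosSum_zero (k : ℕ) : cosSum k (0 : Fin g → ℝ) = 2 * g := by
  simp [cosSum, mul_comm]

lemma cubicWeight_zero : cubicWeight (0 : Fin g → ℝ) = 2 * g * (2 * g + 1) * (g - 2) / 3 := by
  simp only [cubicWeight, cosSum_zero]; ring

lemma cubicWeight_pi : cubicWeight (fun _ : Fin g => π) = -(2 * g * (2 * g + 1) * (g - 2) / 3) := by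
  simp only [cubicWeight, cosSum_const, cos_nat_mul_pi]; ring

lemma eq_zero_of_cosSum_one_eq {θ : Fin g → ℝ} (hθ : θ ∈ Set.univ.pi fun _ => Set.Icc 0 π)
    (h : cosSum 1 θ = 2 * g) : θ = 0 := by
  have hle (j : Fin g) (_ : j ∈ univ) : 2 * cos ((1 : ℕ) * θ j) ≤ 2 := by
    linarith [cos_le_one ((1 : ℕ) * θ j)]
  have hsum : ∑ j, 2 * cos ((1 : ℕ) * θ j) = ∑ _j : Fin g, (2 : ℝ) := by
    rw [← cosSum, h]; simp [mul_comm]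
  funext j
  have hj := (sum_eq_sum_iff_of_le hle).1 hsum j (mem_univ j)
  simp only [Nat.cast_one, one_mul] at hj
  exact injOn_cos (hθ j trivial) ⟨le_rfl, pi_pos.le⟩ (by rw [Pi.zero_apply, cos_zero]; linarith)

lemma eq_pi_of_cosSum_one_eq_neg {θ : Fin g → ℝ} (hθ : θ ∈ Set.univ.pi fun _ => Set.Icc 0 π)
    (h : cosSum 1 θ = -(2 * g)) : θ = fun _ => π := by
  have hle (j : Fin g) (_ : j ∈ univ) : -2 ≤ 2 * cos ((1 : ℕ) * θ j) := by
    linarith [neg_one_le_cos ((1 : ℕ) * θ j)]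
  have hsum : ∑ _j : Fin g, (-2 : ℝ) = ∑ j, 2 * cos ((1 : ℕ) * θ j) := by
    rw [← cosSum, h]; simp [mul_comm]
  funext j
  have hj := (sum_eq_sum_iff_of_le hle).1 hsum j (mem_univ j)
  simp only [Nat.cast_one, one_mul] at hj
  exact injOn_cos (hθ j trivial) ⟨pi_pos.le, le_rfl⟩ (by rw [cos_pi]; linarith)

lemma exists_lt_forall_cosSum_mul_nonneg (hg : 2 < g) :
    ∃ ρ < 2 * (g : ℝ), ∀ θ ∈ Set.univ.pi (fun _ : Fin g => Set.Icc 0 π), ρ < |cosSum 1 θ| →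
      0 ≤ cosSum 1 θ * (cubicWeight θ * symplecticDensity θ) := by
  set K := (Set.univ.pi fun _ : Fin g => Set.Icc 0 π) ∩ {θ | cosSum 1 θ * cubicWeight θ ≤ 0}
  have hK : IsCompact K := (isCompact_univ_pi fun _ => isCompact_Icc).inter_right
    (isClosed_le (by fun_prop) continuous_const)
  have hcorner : 0 < 2 * (g : ℝ) * (2 * g * (2 * g + 1) * (g - 2) / 3) := by
    have : (2 : ℝ) < g := by exact_mod_cast hg
    have : 0 < (g : ℝ) - 2 := by linarith
    positivity
  have hlt : ∀ θ ∈ K, -(2 * (g : ℝ)) < -|cosSum 1 θ| := by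
    rintro θ ⟨hθ, hneg : cosSum 1 θ * cubicWeight θ ≤ 0⟩
    refine neg_lt_neg ((abs_cosSum_le 1 θ).lt_of_ne fun h => ?_)
    rcases (abs_eq (by positivity)).1 h with h | h
    · rw [eq_zero_of_cosSum_one_eq hθ h, cosSum_zero, cubicWeight_zero] at hneg
      linarith
    · rw [eq_pi_of_cosSum_one_eq_neg hθ h, cosSum_const, cubicWeight_pi, Nat.cast_one, one_mul,
        cos_pi] at hneg
      linarith
  obtain ⟨a, ha, hKa⟩ := hK.exists_forall_le' (by fun_prop) hlt
  refine ⟨-a, by linarith, fun θ hθ hρ => ?_⟩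
  have : 0 < cosSum 1 θ * cubicWeight θ := by
    by_contra! h
    linarith [hKa θ ⟨hθ, h⟩]
  rw [← mul_assoc]
  exact mul_nonneg this.le (symplecticDensity_nonneg θ)

lemma exists_mem_pi_Ioo_peak (hg : 2 < g) {t : ℝ} (ht : t < 2 * g) :
    ∃ θ ∈ Set.univ.pi (fun _ : Fin g => Set.Ioo 0 π),
      t < cosSum 1 θ ∧ 0 < cubicWeight θ * symplecticDensity θ := by
  have hg' : (2 : ℝ) < g := by exact_mod_cast hg
  have hnear : ∀ᶠ θ in 𝓝 (0 : Fin g → ℝ), t < cosSum 1 θ ∧ 0 < cubicWeight θ := by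
    refine (continuousAt_const.eventually_lt (continuous_cosSum 1).continuousAt ?_).and
      (continuousAt_const.eventually_lt continuous_cubicWeight.continuousAt ?_)
    · rwa [cosSum_zero]
    · have : 0 < (g : ℝ) - 2 := by linarith
      rw [cubicWeight_zero]; positivity
  -- distinct coordinates, so that the Vandermonde factor of the density does not vanish
  let v : Fin g → ℝ := fun j => (j : ℝ) + 1
  have hv : Tendsto (fun ε : ℝ => ε • v) (𝓝[>] 0) (𝓝 0) := by
    have : Continuous fun ε : ℝ => ε • v := by fun_prop
    exact tendsto_nhdsWithin_of_tendsto_nhds (by simpa using this.tendsto 0)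
  have hsmall : ∀ᶠ ε in 𝓝[>] (0 : ℝ), ε ∈ Set.Ioo 0 (π / g) :=
    Ioo_mem_nhdsGT (div_pos pi_pos (by linarith))
  obtain ⟨ε, ⟨hε0, hεg⟩, hpeak⟩ := (hsmall.and (hv.eventually hnear)).exists
  have hmem : ε • v ∈ Set.univ.pi fun _ => Set.Ioo 0 π := fun j _ => by
    have : (j : ℝ) + 1 ≤ g := by exact_mod_cast j.isLt
    rw [lt_div_iff₀ (by linarith)] at hεg
    simp only [Pi.smul_apply, smul_eq_mul, v]
    constructor <;> nlinarith
  refine ⟨ε • v, hmem, hpeak.1, mul_pos hpeak.2 (symplecticDensity_pos hmem fun i j h => ?_)⟩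
  simpa [v, hε0.ne', Fin.ext_iff] using h

lemma exists_isOpen_peak (hg : 2 < g) {t : ℝ} (ht : t < 2 * g) :
    ∃ B ⊆ Set.univ.pi (fun _ : Fin g => Set.Icc 0 π), IsOpen B ∧ B.Nonempty ∧
      ∃ c > 0, ∀ θ ∈ B, t ≤ cosSum 1 θ ∧ c ≤ cubicWeight θ * symplecticDensity θ := by
  obtain ⟨θ₀, hθ₀, ht₀, hφ₀⟩ := exists_mem_pi_Ioo_peak hg ht
  set c := cubicWeight θ₀ * symplecticDensity θ₀ / 2
  refine ⟨(Set.univ.pi fun _ => Set.Ioo 0 π) ∩ {θ | t < cosSum 1 θ} ∩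
      {θ | c < cubicWeight θ * symplecticDensity θ}, fun θ hθ => ?_, ?_,
    ⟨θ₀, ⟨hθ₀, ht₀⟩, half_lt_self hφ₀⟩, c, by positivity,
    fun θ hθ => ⟨hθ.1.2.le, hθ.2.le⟩⟩
  · exact Set.pi_mono (fun _ _ => Set.Ioo_subset_Icc_self) hθ.1.1
  · exact ((isOpen_set_pi Set.finite_univ fun _ _ => isOpen_Ioo).inter
      (isOpen_lt continuous_const (continuous_cosSum 1))).inter
      (isOpen_lt continuous_const (by fun_prop))

end WeylIntegrand

/-- For fixed `g ≥ 3`, with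
`b_{2n+1} = ∫_{[0,π]^g} w₁^{2n+1}((1/6)w₁³ − (1/2)w₁w₂ + (1/3)w₃ − w₁) dm_g`,
where `dm_g` has density `(1/(g!π^g)) ∏_{i<j}(2cosθ_i − 2cosθ_j)² ∏_i 2sin²θ_i`
with respect to Lebesgue measure, one has `lim_{n→∞} b_{2n+1}^{1/(2n+1)} = 2g`. -/
theorem stmt3 (g : ℕ) (hg : 3 ≤ g)
    (w : ℕ → (Fin g → ℝ) → ℝ)
    (hw : ∀ k θ, w k θ = ∑ j, 2 * Real.cos (k * θ j))
    (dens : (Fin g → ℝ) → ℝ)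
    (hdens : ∀ θ, dens θ = (1 / ((Nat.factorial g : ℝ) * Real.pi ^ g)) *
        (∏ i, ∏ j ∈ Finset.univ.filter (fun j => i < j),
          (2 * Real.cos (θ i) - 2 * Real.cos (θ j))^2) *
        ∏ i, 2 * Real.sin (θ i)^2)
    (b : ℕ → ℝ)
    (hb : ∀ n, b n = ∫ θ in Set.univ.pi (fun _ : Fin g => Set.Icc (0:ℝ) Real.pi),
        (w 1 θ)^(2*n+1) *
          ((1/6)*(w 1 θ)^3 - (1/2)*(w 1 θ)*(w 2 θ) + (1/3)*(w 3 θ) - w 1 θ) * dens θ) :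
    Tendsto (fun n : ℕ => (b n) ^ ((1:ℝ)/(2*n+1))) atTop (nhds (2*g)) := by
  obtain rfl : w = cosSum := funext₂ hw
  obtain rfl : dens = symplecticDensity := funext hdens
  set Ω := Set.univ.pi fun _ : Fin g => Set.Icc (0 : ℝ) π
  have hΩ : IsCompact Ω := isCompact_univ_pi fun _ => isCompact_Icc
  have : IsFiniteMeasure (volume.restrict Ω) := isFiniteMeasure_restrict.2 hΩ.measure_lt_top.ne
  have hφ : Continuous fun θ : Fin g → ℝ => cubicWeight θ * symplecticDensity θ := by fun_prop
  obtain ⟨C, hC⟩ := hΩ.exists_bound_of_continuousOn hφ.continuousOn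
  obtain ⟨ρ, hρ, hsign⟩ := exists_lt_forall_cosSum_mul_nonneg hg
  have hb' (n : ℕ) : b n = ∫ θ, cosSum 1 θ ^ (2 * n + 1) *
      (cubicWeight θ * symplecticDensity θ) ∂volume.restrict Ω := by
    rw [hb]; congr 1; funext θ; rw [cubicWeight]; ring
  simp_rw [hb']
  refine tendsto_integral_odd_moment_rpow (by positivity)
    (continuous_cosSum 1).aestronglyMeasurable hφ.aestronglyMeasurable
    (ae_of_all _ (abs_cosSum_le 1)) (ae_restrict_of_forall_mem hΩ.measurableSet hC)
    ⟨ρ, hρ, ae_restrict_of_forall_mem hΩ.measurableSet hsign⟩ fun t ht => ?_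
  obtain ⟨B, hBΩ, hBo, hBne, hpeak⟩ := exists_isOpen_peak hg ht
  refine ⟨B, hBo.measurableSet, ?_, hpeak⟩
  rw [Measure.restrict_apply hBo.measurableSet, Set.inter_eq_left.2 hBΩ]
  exact hBo.measure_pos volume hBne
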